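/- arXiv:2302.08203 — 2 statements merged into one kernel-verified Lean document; each statement's English description precedes it below -/
import Mathlib

section
/- With notation as above (Z = U Λ Uᵀ symmetric positive definite, w = U^H e ≠ 0, r_loss > 0), the gain G = P_rad/(P_rad + P_loss) = (∑ |w_i|²/λ_i) / (∑ |w_i|²/λ_i + ∑ r_loss |w_i|²/λ_i²) satisfies G ≤ λ_max/(λ_max + r_loss) where λ_max is the largest eigenvalue of Z; moreover G → 0 along any sequence of matrices Z for which min_i λ_i → 0 while the component |w_{i*}|² on a vanishing eigenvalue stays bounded below by a positive constant and the other terms stay bounded. -/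
/-!
Since every eigenvalue is at most `λ_max`, each loss term `r |w_i|²/λ_i²` is at least
`r/λ_max` times the radiated term `|w_i|²/λ_i`, so `P_loss ≥ (r/λ_max) P_rad`, which is the
upper bound. For the limit, `G ≤ P_rad/P_loss`; the loss term at `i₀` alone is
`r |w_{i₀}|²/λ_{i₀}²`, while `P_rad ≤ |w_{i₀}|²/λ_{i₀} + B`, so `G = O(λ_{i₀})`.
-/

open Filter Finset

namespace ArrayGain

variable {ι : Type*} [Fintype ι]

noncomputable def radiatedPower (w : ι → ℂ) (lam : ι → ℝ) : ℝ :=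
  ∑ i, Complex.normSq (w i) / lam i

noncomputable def lossPower (r : ℝ) (w : ι → ℂ) (lam : ι → ℝ) : ℝ :=
  ∑ i, r * Complex.normSq (w i) / lam i ^ 2

noncomputable def gain (r : ℝ) (w : ι → ℂ) (lam : ι → ℝ) : ℝ :=
  radiatedPower w lam / (radiatedPower w lam + lossPower r w lam)

section

variable {r : ℝ} {w : ι → ℂ} {lam : ι → ℝ}

lemma radiatedPower_nonneg (hlam : ∀ i, 0 < lam i) : 0 ≤ radiatedPower w lam :=
  sum_nonneg fun i _ => div_nonneg (Complex.normSq_nonneg _) (hlam i).le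

lemma lossPower_nonneg (hr : 0 ≤ r) : 0 ≤ lossPower r w lam :=
  sum_nonneg fun _ _ => div_nonneg (mul_nonneg hr (Complex.normSq_nonneg _)) (sq_nonneg _)

lemma gain_nonneg (hr : 0 ≤ r) (hlam : ∀ i, 0 < lam i) : 0 ≤ gain r w lam :=
  div_nonneg (radiatedPower_nonneg hlam)
    (add_nonneg (radiatedPower_nonneg hlam) (lossPower_nonneg hr))

lemma mul_radiatedPower_le_mul_lossPower {l : ℝ} (hr : 0 ≤ r) (hlam : ∀ i, 0 < lam i)
    (hle : ∀ i, lam i ≤ l) : r * radiatedPower w lam ≤ l * lossPower r w lam := by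
  rw [radiatedPower, lossPower, mul_sum, mul_sum]
  refine sum_le_sum fun i _ => ?_
  have hi := hlam i
  calc r * (Complex.normSq (w i) / lam i)
      = lam i * (r * Complex.normSq (w i) / lam i ^ 2) := by field_simp
    _ ≤ l * (r * Complex.normSq (w i) / lam i ^ 2) :=
        mul_le_mul_of_nonneg_right (hle i)
          (div_nonneg (mul_nonneg hr (Complex.normSq_nonneg _)) (sq_nonneg _))

end

lemma div_add_le_div_add_of_mul_le {P Q l r : ℝ} (hP : 0 ≤ P) (hl : 0 < l) (hr : 0 < r)
    (h : r * P ≤ l * Q) : P / (P + Q) ≤ l / (l + r) := by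
  have hQ : 0 ≤ Q := nonneg_of_mul_nonneg_right (by nlinarith) hl
  rcases (add_nonneg hP hQ).eq_or_lt with hPQ | hPQ
  · rw [← hPQ, div_zero]
    positivity
  · rw [div_le_div_iff₀ hPQ (by positivity)]
    linarith

theorem gain_le {r l : ℝ} {w : ι → ℂ} {lam : ι → ℝ} (hr : 0 < r) (hl : 0 < l)
    (hlam : ∀ i, 0 < lam i) (hle : ∀ i, lam i ≤ l) : gain r w lam ≤ l / (l + r) :=
  div_add_le_div_add_of_mul_le (radiatedPower_nonneg hlam) hl hr
    (mul_radiatedPower_le_mul_lossPower hr.le hlam hle)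

lemma gain_le_of_normSq_ge [DecidableEq ι] {r c B : ℝ} {w : ι → ℂ} {lam : ι → ℝ} {i₀ : ι}
    (hr : 0 < r) (hlam : ∀ i, 0 < lam i) (hc : 0 < c) (hw : c ≤ Complex.normSq (w i₀))
    (hB : ∑ i ∈ univ.erase i₀, Complex.normSq (w i) / lam i ≤ B) :
    gain r w lam ≤ lam i₀ / r + B * lam i₀ ^ 2 / (r * c) := by
  set L := lam i₀
  set s := Complex.normSq (w i₀)
  have hL : 0 < L := hlam i₀
  have hs : 0 < s := hc.trans_le hw
  have hB0 : 0 ≤ B := (sum_nonneg fun i _ =>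
    div_nonneg (Complex.normSq_nonneg (w i)) (hlam i).le).trans hB
  have hP : radiatedPower w lam ≤ s / L + B := by
    rw [radiatedPower, ← add_sum_erase _ _ (mem_univ i₀)]
    exact add_le_add_right hB _
  have hQ : r * s / L ^ 2 ≤ lossPower r w lam :=
    single_le_sum (f := fun i => r * Complex.normSq (w i) / lam i ^ 2)
      (fun i _ => div_nonneg (mul_nonneg hr.le (Complex.normSq_nonneg _)) (sq_nonneg _))
      (mem_univ i₀)
  have hQ0 : 0 < lossPower r w lam := lt_of_lt_of_le (by positivity) hQ
  calc gain r w lam ≤ radiatedPower w lam / lossPower r w lam :=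
        div_le_div_of_nonneg_left (radiatedPower_nonneg hlam) hQ0
          (le_add_of_nonneg_left (radiatedPower_nonneg hlam))
    _ ≤ (s / L + B) / (r * s / L ^ 2) := div_le_div₀ (by positivity) hP (by positivity) hQ
    _ = L / r + B * L ^ 2 / (r * s) := by field_simp
    _ ≤ L / r + B * L ^ 2 / (r * c) := by gcongr

theorem tendsto_gain_zero [DecidableEq ι] {r c B : ℝ} {W : ℕ → ι → ℂ} {Lam : ℕ → ι → ℝ}
    {i₀ : ι} (hr : 0 < r) (hLam : ∀ n i, 0 < Lam n i)
    (hLam0 : Tendsto (fun n => Lam n i₀) atTop (nhds 0))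
    (hc : 0 < c) (hWlo : ∀ n, c ≤ Complex.normSq (W n i₀))
    (hB : ∀ n, ∑ i ∈ univ.erase i₀, Complex.normSq (W n i) / Lam n i ≤ B) :
    Tendsto (fun n => gain r (W n) (Lam n)) atTop (nhds 0) := by
  have hbound : Tendsto (fun n => Lam n i₀ / r + B * Lam n i₀ ^ 2 / (r * c)) atTop (nhds 0) := by
    simpa using (hLam0.div_const r).add (((hLam0.pow 2).const_mul B).div_const (r * c))
  exact squeeze_zero (fun n => gain_nonneg hr.le (hLam n))
    (fun n => gain_le_of_normSq_ge hr (hLam n) hc (hWlo n) (hB n)) hbound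

end ArrayGain

theorem stmt10_general {M : ℕ} (r : ℝ) (hr : 0 < r)
    -- fixed data for the upper bound
    (lam : Fin M → ℝ) (hlam : ∀ i, 0 < lam i)
    (w : Fin M → ℂ)
    (lmax : ℝ) (hmax1 : ∃ i, lam i = lmax) (hmax2 : ∀ i, lam i ≤ lmax)
    -- sequence data for the limit
    (i₀ : Fin M) (Lam : ℕ → Fin M → ℝ) (W : ℕ → Fin M → ℂ)
    (hLam : ∀ n i, 0 < Lam n i)
    (hLam0 : Tendsto (fun n => Lam n i₀) atTop (nhds 0))
    (c : ℝ) (hc : 0 < c) (hWlo : ∀ n, c ≤ Complex.normSq (W n i₀))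
    (B : ℝ)
    (hB : ∀ n, ∑ i ∈ Finset.univ.erase i₀, Complex.normSq (W n i) / Lam n i ≤ B) :
    (∑ i, Complex.normSq (w i) / lam i) /
        ((∑ i, Complex.normSq (w i) / lam i)
          + ∑ i, r * Complex.normSq (w i) / (lam i) ^ 2)
      ≤ lmax / (lmax + r) ∧
    Tendsto (fun n =>
        (∑ i, Complex.normSq (W n i) / Lam n i) /
          ((∑ i, Complex.normSq (W n i) / Lam n i)
            + ∑ i, r * Complex.normSq (W n i) / (Lam n i) ^ 2))
      atTop (nhds 0) := by
  obtain ⟨j, rfl⟩ := hmax1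
  exact ⟨ArrayGain.gain_le hr (hlam j) hlam hmax2,
    ArrayGain.tendsto_gain_zero hr hLam hLam0 hc hWlo hB⟩

/-- With `Z = U Λ Uᵀ` symmetric positive definite, `w = U^H e ≠ 0`, `r_loss > 0`,
the gain `G = P_rad/(P_rad + P_loss)` (with `P_rad = ∑ |w_i|²/λ_i`,
`P_loss = ∑ r|w_i|²/λ_i²`) satisfies `G ≤ λ_max/(λ_max + r)`, where `λ_max` is
the largest eigenvalue; moreover `G → 0` along any sequence for which the
eigenvalue at an index `i₀` tends to `0` while the power component `|w_{i₀}|²`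
stays bounded below by `c > 0` and the remaining radiated-power terms stay
bounded by `B`. -/
theorem stmt10 {M : ℕ} (r : ℝ) (hr : 0 < r)
    -- fixed data for the upper bound
    (lam : Fin M → ℝ) (hlam : ∀ i, 0 < lam i)
    (w : Fin M → ℂ) (hw : w ≠ 0)
    (lmax : ℝ) (hmax1 : ∃ i, lam i = lmax) (hmax2 : ∀ i, lam i ≤ lmax)
    -- sequence data for the limit
    (i₀ : Fin M) (Lam : ℕ → Fin M → ℝ) (W : ℕ → Fin M → ℂ)
    (hLam : ∀ n i, 0 < Lam n i)
    (hLam0 : Tendsto (fun n => Lam n i₀) atTop (nhds 0))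
    (c : ℝ) (hc : 0 < c) (hWlo : ∀ n, c ≤ Complex.normSq (W n i₀))
    (B : ℝ)
    (hB : ∀ n, ∑ i ∈ Finset.univ.erase i₀, Complex.normSq (W n i) / Lam n i ≤ B) :
    (∑ i, Complex.normSq (w i) / lam i) /
        ((∑ i, Complex.normSq (w i) / lam i)
          + ∑ i, r * Complex.normSq (w i) / (lam i) ^ 2)
      ≤ lmax / (lmax + r) ∧
    Tendsto (fun n =>
        (∑ i, Complex.normSq (W n i) / Lam n i) /
          ((∑ i, Complex.normSq (W n i) / Lam n i)
            + ∑ i, r * Complex.normSq (W n i) / (Lam n i) ^ 2))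
      atTop (nhds 0) :=
  stmt10_general r hr lam hlam w lmax hmax1 hmax2 i₀ Lam W hLam hLam0 c hc hWlo B hB
end

section
/- For M isotropic antennas (g ≡ 1) with vanishing spacing, the limiting maximal directivity satisfies lim_{d→0⁺} e^H Z(d)⁻¹ e can exceed M: specifically, for M = 2 isotropic elements along the endfire direction, lim_{d→0⁺} max directivity e^H Z⁻¹ e = 4 = M², where Z(d) = [[1, sinc(kd)],[sinc(kd), 1]] and e(d) = [1, e^{j k d}]ᵀ (endfire steering). -/
open Matrix Filter Real Topology ComplexConjugate

/-!
With `θ = kd` and `s = sin θ / θ`, inverting the `2 × 2` matrix gives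
`e^H Z⁻¹ e = (2 - 2 s cos θ) / (1 - s²) = θ (2θ - sin 2θ) / ((θ - sin θ)(θ + sin θ))`.
Since `x - sin x ~ x³/6`, the numerator behaves like `(4/3) θ⁴` and the denominator like
`(1/3) θ⁴`, so the ratio tends to `4`.
-/

lemma tendsto_sub_sin_div_pow_three :
    Tendsto (fun x : ℝ => (x - sin x) / x ^ 3) (𝓝[≠] 0) (𝓝 (1 / 6)) := by
  have hrem : Tendsto (fun x : ℝ => (x ^ 3 / 6 - (x - sin x)) / x ^ 3) (𝓝[≠] 0) (𝓝 0) := by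
    have hsq : Tendsto (fun x : ℝ => x ^ 2 / 100) (𝓝[≠] 0) (𝓝 0) := by
      simpa using (((continuous_pow 2).div_const 100).tendsto (0 : ℝ)).mono_left nhdsWithin_le_nhds
    refine squeeze_zero_norm' ?_ hsq
    filter_upwards [self_mem_nhdsWithin,
      nhdsWithin_le_nhds (Icc_mem_nhds (by norm_num : (-1 : ℝ) < 0) one_pos)] with x (hx0 : x ≠ 0) hx1
    rw [norm_div, norm_pow, Real.norm_eq_abs, div_le_iff₀ (by positivity)]
    calc |x ^ 3 / 6 - (x - sin x)| = |sin x - (x - x ^ 3 / 6)| := by ring_nf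
      _ ≤ |x| ^ 5 / 100 := sin_bound (abs_le.2 hx1)
      _ = x ^ 2 / 100 * |x| ^ 3 := by rw [← sq_abs x]; ring
  refine (hrem.const_sub (1 / 6)).congr' ?_ |>.trans (by simp)
  filter_upwards [self_mem_nhdsWithin] with x (hx : x ≠ 0)
  field_simp
  ring

lemma star_dotProduct_inv_mulVec_exp (s θ : ℝ) (hs : 1 - s ^ 2 ≠ 0) :
    star ![1, Complex.exp (θ * Complex.I)] ⬝ᵥ
        ((Matrix.of ![![(1 : ℂ), (s : ℂ)], ![(s : ℂ), 1]])⁻¹ *ᵥ ![1, Complex.exp (θ * Complex.I)])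
      = ((2 - 2 * s * cos θ) / (1 - s ^ 2) : ℝ) := by
  have hdet : (Matrix.of ![![(1 : ℂ), (s : ℂ)], ![(s : ℂ), 1]]).det = ((1 - s ^ 2 : ℝ) : ℂ) := by
    simp [Matrix.det_fin_two]; ring
  rw [Matrix.inv_def, hdet, Matrix.adjugate_fin_two]
  have hsC : (1 - (s : ℂ) ^ 2) ≠ 0 := by exact_mod_cast hs
  have hcos : conj (Complex.exp (θ * Complex.I)) + Complex.exp (θ * Complex.I)
      = 2 * Complex.cos θ := by
    rw [← Complex.exp_conj, Complex.cos]
    simp only [map_mul, Complex.conj_ofReal, Complex.conj_I]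
    ring_nf
  have hnorm : conj (Complex.exp (θ * Complex.I)) * Complex.exp (θ * Complex.I) = 1 := by
    rw [← Complex.exp_conj, ← Complex.exp_add]
    simp [map_mul]
  simp [dotProduct, Fin.sum_univ_two, Matrix.mulVec]
  field_simp
  linear_combination hnorm - s * hcos

lemma tendsto_const_mul_nhdsNE_zero {M₀ : Type*} [MulZeroClass M₀] [NoZeroDivisors M₀]
    [TopologicalSpace M₀] [ContinuousMul M₀] {c : M₀} (hc : c ≠ 0) :
    Tendsto (fun x => c * x) (𝓝[≠] 0) (𝓝[≠] 0) := by
  refine tendsto_nhdsWithin_iff.2 ⟨?_, ?_⟩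
  · simpa using ((continuous_const_mul c).tendsto 0).mono_left nhdsWithin_le_nhds
  · filter_upwards [self_mem_nhdsWithin] with x hx using mul_ne_zero hc hx

lemma endfire_directivity_eq_of_ne_zero {θ : ℝ} (hθ : θ ≠ 0) :
    (2 - 2 * (sin θ / θ) * cos θ) / (1 - (sin θ / θ) ^ 2)
      = 8 * ((2 * θ - sin (2 * θ)) / (2 * θ) ^ 3)
        / ((θ - sin θ) / θ ^ 3 * (1 + sin θ / θ)) := by
  have hsq : θ ^ 2 - sin θ ^ 2 ≠ 0 := (sub_pos.2 (sin_sq_lt_sq hθ)).ne'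
  obtain ⟨hadd, hsub⟩ := mul_ne_zero_iff.1 (sq_sub_sq θ (sin θ) ▸ hsq)
  rw [sin_two_mul]
  field_simp
  ring

lemma tendsto_endfire_directivity :
    Tendsto (fun θ : ℝ => (2 - 2 * (sin θ / θ) * cos θ) / (1 - (sin θ / θ) ^ 2))
      (𝓝[≠] 0) (𝓝 4) := by
  have hsinc : Tendsto (fun θ : ℝ => sin θ / θ) (𝓝[≠] 0) (𝓝 1) := by
    refine ((continuous_sinc.tendsto 0).mono_left nhdsWithin_le_nhds).congr' ?_ |>.trans (by simp)
    filter_upwards [self_mem_nhdsWithin] with θ hθ using sinc_of_ne_zero hθ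
  have hdouble := tendsto_sub_sin_div_pow_three.comp (tendsto_const_mul_nhdsNE_zero two_ne_zero)
  have hlim := (hdouble.const_mul 8).div
    (tendsto_sub_sin_div_pow_three.mul (hsinc.const_add 1)) (by norm_num)
  refine (hlim.congr' ?_).trans (by norm_num)
  filter_upwards [self_mem_nhdsWithin] with θ hθ using (endfire_directivity_eq_of_ne_zero hθ).symm

/-- Uzkov superdirectivity for `M = 2`: with
`Z(d) = [[1, sinc(kd)],[sinc(kd), 1]]` and endfire steering
`e(d) = [1, e^{jkd}]ᵀ`, the maximal directivity `e(d)^H Z(d)⁻¹ e(d)` tends to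
`4 = M²` as the spacing `d → 0⁺`. -/
theorem stmt15 (k : ℝ) (hk : 0 < k) :
    Tendsto (fun d : ℝ =>
        star (![1, Complex.exp (Complex.I * k * d)]) ⬝ᵥ
          ((Matrix.of ![![(1 : ℂ), ((Real.sin (k * d) / (k * d) : ℝ) : ℂ)],
              ![((Real.sin (k * d) / (k * d) : ℝ) : ℂ), 1]])⁻¹ *ᵥ
            ![1, Complex.exp (Complex.I * k * d)]))
      (nhdsWithin 0 (Set.Ioi 0)) (nhds 4) := by
  have hkd : Tendsto (fun d : ℝ => k * d) (𝓝[>] 0) (𝓝[≠] 0) :=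
    (tendsto_const_mul_nhdsNE_zero hk.ne').mono_left (nhdsGT_le_nhdsNE 0)
  have hlim := (Complex.continuous_ofReal.tendsto 4).comp (tendsto_endfire_directivity.comp hkd)
  refine (hlim.congr' ?_).trans (by simp)
  filter_upwards [self_mem_nhdsWithin] with d hd
  have hθ : k * d ≠ 0 := (mul_pos hk hd).ne'
  have hs : 1 - (sin (k * d) / (k * d)) ^ 2 ≠ 0 := by
    rw [div_pow, one_sub_div (pow_ne_zero 2 hθ)]
    exact div_ne_zero (sub_pos.2 (sin_sq_lt_sq hθ)).ne' (pow_ne_zero 2 hθ)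
  rw [show Complex.I * k * d = ((k * d : ℝ) : ℂ) * Complex.I by push_cast; ring,
    star_dotProduct_inv_mulVec_exp _ _ hs]
  rfl
end
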